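/- Weak global mutual controllability is equivalent to mutual controllability: for prefix-closed L₁ ⊆ A₁*, L₂ ⊆ A₂*, the condition P_j⁻¹(L_j)·(A_{j,u} ∩ A_i) ∩ P_i⁻¹(L_i) ⊆ P_j⁻¹(L_j) for all i ≠ j holds if and only if L_j·(A_{j,u} ∩ A_i) ∩ P_j(P_i⁻¹(L_i)) ⊆ L_j for all i ≠ j. -/
import Mathlib


/-- Natural projection erasing events outside `B`. -/
noncomputable def proj {A : Type*} (B : Set A) (w : List A) : List A :=
  w.filter (fun a => @decide (a ∈ B) (Classical.propDecidable _))

/-- Concatenation of a language with a single event from `B`. -/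
def cat {A : Type*} (L : Set (List A)) (B : Set A) : Set (List A) :=
  {w | ∃ u ∈ L, ∃ a ∈ B, w = u ++ [a]}

/-- A language is prefix-closed. -/
def prefixClosed {A : Type*} (L : Set (List A)) : Prop :=
  ∀ w ∈ L, ∀ u : List A, u <+: w → u ∈ L

/-- `K` is controllable with respect to `L` and uncontrollable events `Au`. -/
def controllable {A : Type*} (K L : Set (List A)) (Au : Set A) : Prop :=
  cat K Au ∩ L ⊆ K

/-- `K` is normal with respect to `L` and observable events `Ao`. -/
def normalLang {A : Type*} (Ao : Set A) (K L : Set (List A)) : Prop :=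
  proj Ao ⁻¹' (proj Ao '' K) ∩ L ⊆ K

/-- Supremal controllable sublanguage of `K` w.r.t. `L` and `Au`. -/
def supC {A : Type*} (K L : Set (List A)) (Au : Set A) : Set (List A) :=
  ⋃₀ {K' | K' ⊆ K ∧ controllable K' L Au}

/-- Supremal normal sublanguage of `K` w.r.t. `L` and `Ao`. -/
def supN {A : Type*} (Ao : Set A) (K L : Set (List A)) : Set (List A) :=
  ⋃₀ {K' | K' ⊆ K ∧ normalLang Ao K' L}

lemma proj_append {A : Type*} (B : Set A) (u v : List A) :
    proj B (u ++ v) = proj B u ++ proj B v := List.filter_append _ _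

lemma proj_singleton_mem {A : Type*} {B : Set A} {a : A} (h : a ∈ B) :
    proj B [a] = [a] := by
  simp [proj, h]

lemma proj_eq_self {A : Type*} {B : Set A} {w : List A} (h : ∀ a ∈ w, a ∈ B) :
    proj B w = w := by
  apply List.filter_eq_self.mpr
  intro a ha
  simpa using h a ha

/-- One half of the equivalence, stated for a single pair (i,j). -/
lemma half {A : Type*} (A1 A2 Au : Set A) (L1 L2 : Set (List A))
    (hW1 : ∀ w ∈ L1, ∀ a ∈ w, a ∈ A1)
    (hpc2 : prefixClosed L2)
    (h : cat (proj A1 ⁻¹' L1) (A1 ∩ Au ∩ A2) ∩ proj A2 ⁻¹' L2 ⊆ proj A1 ⁻¹' L1) :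
    cat L1 (A1 ∩ Au ∩ A2) ∩ (proj A1 '' (proj A2 ⁻¹' L2)) ⊆ L1 := by
  rintro w ⟨⟨u, hu, a, ha, rfl⟩, v, hv, hpv⟩
  -- hpv : proj A1 v = u ++ [a]
  -- decompose v
  obtain ⟨v₁, v₂, rfl, hv₁, hv₂⟩ := List.filter_eq_append_iff.mp hpv
  obtain ⟨l₁, l₂, rfl, hl₁, _, hl₂⟩ := List.filter_eq_cons_iff.mp hv₂
  have hv₁' : proj A1 v₁ = u := hv₁
  have hl₁' : proj A1 l₁ = [] := by
    apply List.filter_eq_nil_iff.mpr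
    intro x hx
    simpa using hl₁ x hx
  have key : v₁ ++ l₁ ++ [a] ∈ proj A1 ⁻¹' L1 := by
    apply h
    constructor
    · refine ⟨v₁ ++ l₁, ?_, a, ha, rfl⟩
      show proj A1 (v₁ ++ l₁) ∈ L1
      rw [proj_append, hl₁', hv₁', List.append_nil]
      exact hu
    · show proj A2 (v₁ ++ l₁ ++ [a]) ∈ L2
      refine hpc2 _ hv _ ⟨proj A2 l₂, ?_⟩
      show proj A2 (v₁ ++ l₁ ++ [a]) ++ proj A2 l₂ = proj A2 (v₁ ++ (l₁ ++ ([a] ++ l₂)))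
      simp [proj_append, List.append_assoc]
      exact (proj_append A2 [a] l₂).symm
  have : proj A1 (v₁ ++ l₁ ++ [a]) = u ++ [a] := by
    rw [proj_append, proj_append, hl₁', hv₁', List.append_nil,
      proj_singleton_mem ha.1.1]
  rwa [Set.mem_preimage, this] at key

/-- Other half of the equivalence, stated for a single pair (i,j). -/
lemma half' {A : Type*} (A1 A2 Au : Set A) (L1 L2 : Set (List A))
    (hW1 : ∀ w ∈ L1, ∀ a ∈ w, a ∈ A1)
    (h : cat L1 (A1 ∩ Au ∩ A2) ∩ (proj A1 '' (proj A2 ⁻¹' L2)) ⊆ L1) :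
    cat (proj A1 ⁻¹' L1) (A1 ∩ Au ∩ A2) ∩ proj A2 ⁻¹' L2 ⊆ proj A1 ⁻¹' L1 := by
  rintro w ⟨⟨u, hu, a, ha, rfl⟩, hw2⟩
  show proj A1 (u ++ [a]) ∈ L1
  rw [proj_append, proj_singleton_mem ha.1.1]
  apply h
  constructor
  · exact ⟨proj A1 u, hu, a, ha, rfl⟩
  · exact ⟨u ++ [a], hw2, by rw [proj_append, proj_singleton_mem ha.1.1]⟩

/-- Weak global mutual controllability is equivalent to mutual controllability. -/
theorem stmt11 {A : Type*} (A1 A2 Au : Set A) (L1 L2 : Set (List A))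
    (hW1 : ∀ w ∈ L1, ∀ a ∈ w, a ∈ A1) (hW2 : ∀ w ∈ L2, ∀ a ∈ w, a ∈ A2)
    (hpc1 : prefixClosed L1) (hpc2 : prefixClosed L2)
    (hne1 : ([] : List A) ∈ L1) (hne2 : ([] : List A) ∈ L2) :
    (cat (proj A1 ⁻¹' L1) (A1 ∩ Au ∩ A2) ∩ proj A2 ⁻¹' L2 ⊆ proj A1 ⁻¹' L1 ∧
     cat (proj A2 ⁻¹' L2) (A2 ∩ Au ∩ A1) ∩ proj A1 ⁻¹' L1 ⊆ proj A2 ⁻¹' L2)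
    ↔
    (cat L1 (A1 ∩ Au ∩ A2) ∩ (proj A1 '' (proj A2 ⁻¹' L2)) ⊆ L1 ∧
     cat L2 (A2 ∩ Au ∩ A1) ∩ (proj A2 '' (proj A1 ⁻¹' L1)) ⊆ L2) := by
  constructor
  · rintro ⟨h1, h2⟩
    exact ⟨half A1 A2 Au L1 L2 hW1 hpc2 h1, half A2 A1 Au L2 L1 hW2 hpc1 h2⟩
  · rintro ⟨h1, h2⟩
    exact ⟨half' A1 A2 Au L1 L2 hW1 h1, half' A2 A1 Au L2 L1 hW2 h2⟩
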